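/- Mirsky's inequality for density matrices: if ρ and σ are density matrices on ℂ^d with eigenvalues r₁ ≥ r₂ ≥ … ≥ r_d and s₁ ≥ s₂ ≥ … ≥ s_d respectively (sorted decreasingly), then ∑_i |r_i − s_i| ≤ ‖ρ − σ‖₁. -/

import Mathlib

open Matrix BigOperators
open scoped Kronecker ComplexOrder

noncomputable def shannonEntropy {d : ℕ} (p : Fin d → ℝ) : ℝ := ∑ x, Real.negMulLog (p x)

noncomputable def binEnt (x : ℝ) : ℝ := Real.negMulLog x + Real.negMulLog (1 - x)

def IsProb {d : ℕ} (p : Fin d → ℝ) : Prop := (∀ x, 0 ≤ p x) ∧ ∑ x, p x = 1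

def IsDensity {n : Type*} [Fintype n] [DecidableEq n] (ρ : Matrix n n ℂ) : Prop :=
  ρ.PosSemidef ∧ ρ.trace = 1

noncomputable def traceNorm {n : Type*} [Fintype n] [DecidableEq n] (A : Matrix n n ℂ) : ℝ :=
  ∑ i, Real.sqrt ((Matrix.posSemidef_conjTranspose_mul_self A).1.eigenvalues i)

noncomputable def vnEntropy {n : Type*} [Fintype n] [DecidableEq n] (ρ : Matrix n n ℂ) : ℝ :=
  if h : ρ.IsHermitian then ∑ i, Real.negMulLog (h.eigenvalues i) else 0

noncomputable def ptraceA {a b : ℕ} (ρ : Matrix (Fin a × Fin b) (Fin a × Fin b) ℂ) : Matrix (Fin b) (Fin b) ℂ :=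
  Matrix.of fun j j' => ∑ i, ρ (i, j) (i, j')

noncomputable def ptraceB {a b : ℕ} (ρ : Matrix (Fin a × Fin b) (Fin a × Fin b) ℂ) : Matrix (Fin a) (Fin a) ℂ :=
  Matrix.of fun i i' => ∑ j, ρ (i, j) (i', j)

noncomputable def condEnt {a b : ℕ} (ρ : Matrix (Fin a × Fin b) (Fin a × Fin b) ℂ) : ℝ :=
  vnEntropy ρ - vnEntropy (ptraceA ρ)

noncomputable def posPart {n : Type*} [Fintype n] [DecidableEq n] (A : Matrix n n ℂ) : Matrix n n ℂ :=
  if h : A.IsHermitian then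
    (h.eigenvectorUnitary : Matrix n n ℂ) * Matrix.diagonal (fun i => ((max (h.eigenvalues i) 0 : ℝ) : ℂ)) *
      (h.eigenvectorUnitary : Matrix n n ℂ)ᴴ
  else 0

noncomputable def matLog {n : Type*} [Fintype n] [DecidableEq n] (A : Matrix n n ℂ) : Matrix n n ℂ :=
  if h : A.IsHermitian then
    (h.eigenvectorUnitary : Matrix n n ℂ) * Matrix.diagonal (fun i => (Real.log (h.eigenvalues i) : ℂ)) *
      (h.eigenvectorUnitary : Matrix n n ℂ)ᴴ
  else 0

noncomputable def relEnt {n : Type*} [Fintype n] [DecidableEq n] (ρ γ : Matrix n n ℂ) : ℝ :=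
  ((ρ * (matLog ρ - matLog γ)).trace).re

open Classical in
noncomputable def matSqrt {n : Type*} [Fintype n] [DecidableEq n] (A : Matrix n n ℂ) : Matrix n n ℂ :=
  if h : A.PosSemidef then
    (h.1.eigenvectorUnitary : Matrix n n ℂ) * Matrix.diagonal ((↑) ∘ Real.sqrt ∘ h.1.eigenvalues) *
      (star h.1.eigenvectorUnitary : Matrix n n ℂ)
  else 0

noncomputable def fidelity {n : Type*} [Fintype n] [DecidableEq n] (ρ σ : Matrix n n ℂ) : ℝ :=
  traceNorm (matSqrt ρ * matSqrt σ)

noncomputable def maxEig {n : Type*} [Fintype n] [DecidableEq n] (A : Matrix n n ℂ) : ℝ :=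
  if h : A.IsHermitian then ⨆ i, h.eigenvalues i else 0

noncomputable def outer {n : Type*} [Fintype n] (v : n → ℂ) : Matrix n n ℂ :=
  Matrix.vecMulVec v (star v)

/-!
Write `Δ = A - B = Δ⁺ - Δ⁻` and put `τ = A + Δ⁻ = B + Δ⁺`. Since `A ≤ τ` and `B ≤ τ`, Weyl's
monotonicity principle (a Courant–Fischer dimension count) gives `aₖ ≤ tₖ` and `bₖ ≤ tₖ` for the
decreasingly sorted eigenvalues, hence `|aₖ - bₖ| ≤ (tₖ - aₖ) + (tₖ - bₖ)`. Summing over `k`, the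
right-hand side becomes `tr Δ⁻ + tr Δ⁺ = tr |Δ| = ‖Δ‖₁`.
-/

open Module

section

variable {𝕜 E : Type*} [RCLike 𝕜] [NormedAddCommGroup E] [InnerProductSpace 𝕜 E]

lemma OrthonormalBasis.exists_ne_zero_forall_repr_eq_zero [FiniteDimensional 𝕜 E]
    {ι ι' : Type*} [Fintype ι] [Fintype ι'] (b : OrthonormalBasis ι 𝕜 E)
    (b' : OrthonormalBasis ι' 𝕜 E) (s : Finset ι) (s' : Finset ι')
    (h : s.card + s'.card < finrank 𝕜 E) :
    ∃ x ≠ 0, (∀ i ∈ s, b.repr x i = 0) ∧ ∀ i ∈ s', b'.repr x i = 0 := by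
  let L : E →ₗ[𝕜] (s → 𝕜) × (s' → 𝕜) :=
    (LinearMap.pi fun i : s =>
        (EuclideanSpace.proj (𝕜 := 𝕜) (i : ι)).toLinearMap ∘ₗ b.repr.toLinearMap).prod
      (LinearMap.pi fun i : s' =>
        (EuclideanSpace.proj (𝕜 := 𝕜) (i : ι')).toLinearMap ∘ₗ b'.repr.toLinearMap)
  have hker : LinearMap.ker L ≠ ⊥ :=
    LinearMap.ker_ne_bot_of_finrank_lt (by simpa [L] using h)
  obtain ⟨x, hxL, hx0⟩ := Submodule.exists_mem_ne_zero_of_ne_bot hker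
  refine ⟨x, hx0, fun i hi => ?_, fun i hi => ?_⟩
  · exact congrFun (congrArg Prod.fst hxL) ⟨i, hi⟩
  · exact congrFun (congrArg Prod.snd hxL) ⟨i, hi⟩

namespace LinearMap.IsSymmetric

variable [FiniteDimensional 𝕜 E] {n : ℕ} (hn : finrank 𝕜 E = n) {T : E →ₗ[𝕜] E}

lemma re_inner_map_self_eq_sum (hT : T.IsSymmetric) (x : E) :
    RCLike.re (inner 𝕜 (T x) x) =
      ∑ i, hT.eigenvalues hn i * ‖(hT.eigenvectorBasis hn).repr x i‖ ^ 2 := by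
  rw [← (hT.eigenvectorBasis hn).repr.inner_map_map, PiLp.inner_apply, map_sum]
  refine Finset.sum_congr rfl fun i _ => ?_
  rw [eigenvectorBasis_apply_self_apply, RCLike.inner_apply, map_mul (starRingEnd 𝕜),
    RCLike.conj_ofReal, mul_left_comm, RCLike.mul_conj, ← RCLike.ofReal_pow, RCLike.re_ofReal_mul,
    RCLike.ofReal_re]

lemma mul_norm_sq_le_re_inner_map_self (hT : T.IsSymmetric) {x : E} {c : ℝ}
    (hc : ∀ i, (hT.eigenvectorBasis hn).repr x i ≠ 0 → c ≤ hT.eigenvalues hn i) :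
    c * ‖x‖ ^ 2 ≤ RCLike.re (inner 𝕜 (T x) x) := by
  rw [hT.re_inner_map_self_eq_sum hn, ← (hT.eigenvectorBasis hn).repr.norm_map,
    EuclideanSpace.norm_sq_eq, Finset.mul_sum]
  refine Finset.sum_le_sum fun i _ => ?_
  by_cases hi : (hT.eigenvectorBasis hn).repr x i = 0
  · simp [hi]
  · exact mul_le_mul_of_nonneg_right (hc i hi) (sq_nonneg _)

lemma re_inner_map_self_le_mul_norm_sq (hT : T.IsSymmetric) {x : E} {c : ℝ}
    (hc : ∀ i, (hT.eigenvectorBasis hn).repr x i ≠ 0 → hT.eigenvalues hn i ≤ c) :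
    RCLike.re (inner 𝕜 (T x) x) ≤ c * ‖x‖ ^ 2 := by
  rw [hT.re_inner_map_self_eq_sum hn, ← (hT.eigenvectorBasis hn).repr.norm_map,
    EuclideanSpace.norm_sq_eq, Finset.mul_sum]
  refine Finset.sum_le_sum fun i _ => ?_
  by_cases hi : (hT.eigenvectorBasis hn).repr x i = 0
  · simp [hi]
  · exact mul_le_mul_of_nonneg_right (hc i hi) (sq_nonneg _)

theorem eigenvalues_le_of_le {S : E →ₗ[𝕜] E} (hT : T.IsSymmetric) (hS : S.IsSymmetric)
    (hTS : T ≤ S) (k : Fin n) : hT.eigenvalues hn k ≤ hS.eigenvalues hn k := by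
  -- `x` lies in the span of the top `k + 1` eigenvectors of `T` and the bottom `n - k` of `S`.
  obtain ⟨x, hx0, hxT, hxS⟩ :=
    (hT.eigenvectorBasis hn).exists_ne_zero_forall_repr_eq_zero (hS.eigenvectorBasis hn)
      (Finset.Ioi k) (Finset.Iio k) (by simp only [Fin.card_Ioi, Fin.card_Iio]; omega)
  have hTx := hT.mul_norm_sq_le_re_inner_map_self hn (x := x) (c := hT.eigenvalues hn k)
    fun i hi => hT.eigenvalues_antitone hn <| not_lt.mp fun hki => hi <| hxT i <| by simpa
  have hSx := hS.re_inner_map_self_le_mul_norm_sq hn (x := x) (c := hS.eigenvalues hn k)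
    fun i hi => hS.eigenvalues_antitone hn <| not_lt.mp fun hik => hi <| hxS i <| by simpa
  have hTSx : RCLike.re (inner 𝕜 (T x) x) ≤ RCLike.re (inner 𝕜 (S x) x) := by
    simpa [inner_sub_left] using hTS.re_inner_nonneg_left x
  exact le_of_mul_le_mul_right (hTx.trans (hTSx.trans hSx)) (by positivity)

end LinearMap.IsSymmetric
end

namespace Matrix

open scoped MatrixOrder

variable {𝕜 : Type*} [RCLike 𝕜] {n : Type*} [Fintype n] [DecidableEq n]

namespace IsHermitian

lemma eigenvalues₀_le_of_le {A B : Matrix n n 𝕜} (hA : A.IsHermitian) (hB : B.IsHermitian)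
    (hAB : A ≤ B) (k : Fin (Fintype.card n)) : hA.eigenvalues₀ k ≤ hB.eigenvalues₀ k :=
  LinearMap.IsSymmetric.eigenvalues_le_of_le _ _ _
    (by rwa [LinearMap.le_def, ← map_sub, isPositive_toEuclideanLin_iff]) k

lemma sum_eigenvalues₀ {A : Matrix n n 𝕜} (hA : A.IsHermitian) :
    ∑ k, hA.eigenvalues₀ k = RCLike.re A.trace := by
  rw [hA.trace_eq_sum_eigenvalues, map_sum]
  simp only [RCLike.ofReal_re, eigenvalues]
  exact (Equiv.sum_comp _ _).symm

lemma eigenvalues_comp_eq_eigenvalues₀ {A : Matrix n n 𝕜} (hA : A.IsHermitian)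
    {e : Fin (Fintype.card n) ≃ n} (he : Antitone (hA.eigenvalues ∘ e)) :
    hA.eigenvalues ∘ e = hA.eigenvalues₀ := by
  let e₀ : Fin (Fintype.card n) ≃ n := Fintype.equivOfCardEq (Fintype.card_fin _)
  have h := Tuple.unique_monotone (f := OrderDual.toDual ∘ hA.eigenvalues₀)
    (σ := e.trans e₀.symm) (τ := Equiv.refl _) ?_ ?_
  · funext k
    simpa [eigenvalues, e₀] using congrFun h k
  · exact monotone_toDual_comp_iff.mpr he
  · exact monotone_toDual_comp_iff.mpr hA.eigenvalues₀_antitone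

lemma trace_cfc {A : Matrix n n 𝕜} (hA : A.IsHermitian) (f : ℝ → ℝ) :
    (cfc f A).trace = ∑ i, (f (hA.eigenvalues i) : 𝕜) := by
  rw [hA.cfc_eq, IsHermitian.cfc, Unitary.conjStarAlgAut_apply, trace_mul_cycle,
    Unitary.coe_star_mul_self, one_mul, trace_diagonal]
  rfl

end IsHermitian

lemma traceNorm_eq_trace_abs (A : Matrix n n ℂ) : (traceNorm A : ℂ) = (CFC.abs A).trace := by
  have hA := posSemidef_conjTranspose_mul_self A
  rw [CFC.abs, star_eq_conjTranspose, CFC.sqrt_eq_real_sqrt _ hA.nonneg, cfcₙ_eq_cfc,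
    hA.1.trace_cfc, traceNorm]
  push_cast
  rfl

theorem IsHermitian.sum_abs_eigenvalues₀_sub_le_traceNorm {A B : Matrix n n ℂ}
    (hA : A.IsHermitian) (hB : B.IsHermitian) :
    ∑ k, |hA.eigenvalues₀ k - hB.eigenvalues₀ k| ≤ traceNorm (A - B) := by
  set Δ := A - B with hΔdef
  have hΔ : IsSelfAdjoint Δ := hA.sub hB
  have hτB : A + Δ⁻ = B + Δ⁺ := by
    calc A + Δ⁻ = B + Δ + Δ⁻ := by rw [hΔdef]; abel
      _ = B + (Δ⁺ - Δ⁻) + Δ⁻ := by rw [CFC.posPart_sub_negPart Δ hΔ]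
      _ = B + Δ⁺ := by abel
  have hτ : (A + Δ⁻).IsHermitian := hA.add (CFC.negPart_nonneg Δ).posSemidef.1
  have hAτ := hA.eigenvalues₀_le_of_le hτ (le_add_of_nonneg_right (CFC.negPart_nonneg Δ))
  have hBτ := hB.eigenvalues₀_le_of_le hτ (hτB ▸ le_add_of_nonneg_right (CFC.posPart_nonneg Δ))
  have hA_sum : ∑ k, hτ.eigenvalues₀ k - ∑ k, hA.eigenvalues₀ k = RCLike.re Δ⁻.trace := by
    rw [hτ.sum_eigenvalues₀, hA.sum_eigenvalues₀, trace_add, map_add, add_sub_cancel_left]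
  have hB_sum : ∑ k, hτ.eigenvalues₀ k - ∑ k, hB.eigenvalues₀ k = RCLike.re Δ⁺.trace := by
    rw [hτ.sum_eigenvalues₀, hB.sum_eigenvalues₀, hτB, trace_add, map_add, add_sub_cancel_left]
  calc ∑ k, |hA.eigenvalues₀ k - hB.eigenvalues₀ k|
      ≤ ∑ k, ((hτ.eigenvalues₀ k - hA.eigenvalues₀ k) + (hτ.eigenvalues₀ k - hB.eigenvalues₀ k)) :=
        Finset.sum_le_sum fun k _ => abs_sub_le_iff.mpr
          ⟨by linarith [hAτ k, hBτ k], by linarith [hAτ k, hBτ k]⟩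
    _ = RCLike.re (Δ⁺ + Δ⁻).trace := by
        rw [Finset.sum_add_distrib, Finset.sum_sub_distrib, Finset.sum_sub_distrib, hA_sum,
          hB_sum, trace_add, map_add, add_comm]
    _ = traceNorm Δ := by
        rw [CFC.posPart_add_negPart Δ hΔ, ← traceNorm_eq_trace_abs, RCLike.re_to_complex,
          Complex.ofReal_re]

end Matrix

open Matrix

theorem stmt_16 {d : ℕ} (ρ σ : Matrix (Fin d) (Fin d) ℂ) (hρ : IsDensity ρ) (hσ : IsDensity σ)
    (r s : Fin d → ℝ) (hr : Antitone r) (hs : Antitone s)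
    (hre : ∃ e : Equiv.Perm (Fin d), r = hρ.1.1.eigenvalues ∘ e)
    (hse : ∃ e : Equiv.Perm (Fin d), s = hσ.1.1.eigenvalues ∘ e) :
    ∑ i, |r i - s i| ≤ traceNorm (ρ - σ) := by
  obtain ⟨e, rfl⟩ := hre
  obtain ⟨e', rfl⟩ := hse
  let c : Fin (Fintype.card (Fin d)) ≃o Fin d := Fin.castOrderIso (Fintype.card_fin d)
  have hr₀ := hρ.1.1.eigenvalues_comp_eq_eigenvalues₀ (e := c.toEquiv.trans e)
    (hr.comp_monotone c.monotone)
  have hs₀ := hσ.1.1.eigenvalues_comp_eq_eigenvalues₀ (e := c.toEquiv.trans e')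
    (hs.comp_monotone c.monotone)
  calc ∑ i, |(hρ.1.1.eigenvalues ∘ e) i - (hσ.1.1.eigenvalues ∘ e') i|
      = ∑ k, |hρ.1.1.eigenvalues₀ k - hσ.1.1.eigenvalues₀ k| := by
        rw [← hr₀, ← hs₀]
        exact (c.toEquiv.sum_comp _).symm
    _ ≤ traceNorm (ρ - σ) := hρ.1.1.sum_abs_eigenvalues₀_sub_le_traceNorm hσ.1.1
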